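/- Let M < −1, σ ∈ ℝⁿ, and ρ̃ ∈ ℝ. Then ∫_{|σ| ≤ |ρ| ≤ (1/2)|ρ̃|} ⟨ρ⟩ · ⟨σ, ρ⟩^{M−1} dρ ≲ ⟨σ⟩^{M+1}, with implied constant depending only on M. -/

import Mathlib

open MeasureTheory

/-!
The weight `⟨ρ⟩` is at most `⟨σ, ρ⟩`, so the integrand is dominated by `⟨σ, ρ⟩ ^ M`, whose integral
over the whole line is computed by the substitution `ρ = ⟨σ⟩ t`: it equals `⟨σ⟩ ^ (M + 1)` times
`∫ ⟨t⟩ ^ M dt`, which is finite because `M < -1`.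
-/

namespace Real

theorem integrable_sqrt_one_add_sq_rpow {p : ℝ} (hp : p < -1) :
    Integrable fun t : ℝ => √(1 + t ^ 2) ^ p := by
  have hdim : (Module.finrank ℝ ℝ : ℝ) < -p := by
    rw [Module.finrank_self, Nat.cast_one]; linarith
  convert integrable_rpow_neg_one_add_norm_sq (μ := volume) hdim using 2 with t
  rw [norm_eq_abs, sq_abs, neg_neg, sqrt_eq_rpow, ← rpow_mul (by positivity), one_div_mul_eq_div]

theorem sqrt_sq_add_sq_rpow {a : ℝ} (ha : 0 < a) (p ρ : ℝ) :
    √(a ^ 2 + ρ ^ 2) ^ p = a ^ p * √(1 + (ρ / a) ^ 2) ^ p := by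
  have hscale : a ^ 2 + ρ ^ 2 = a ^ 2 * (1 + (ρ / a) ^ 2) := by field_simp
  rw [hscale, sqrt_mul (by positivity), sqrt_sq ha.le, mul_rpow ha.le (sqrt_nonneg _)]

theorem integrable_sqrt_sq_add_sq_rpow {a p : ℝ} (ha : 0 < a) (hp : p < -1) :
    Integrable fun ρ : ℝ => √(a ^ 2 + ρ ^ 2) ^ p := by
  simp_rw [sqrt_sq_add_sq_rpow ha]
  exact ((integrable_sqrt_one_add_sq_rpow hp).comp_div ha.ne').const_mul _

theorem integral_sqrt_sq_add_sq_rpow {a : ℝ} (ha : 0 < a) (p : ℝ) :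
    ∫ ρ : ℝ, √(a ^ 2 + ρ ^ 2) ^ p = a ^ (p + 1) * ∫ t : ℝ, √(1 + t ^ 2) ^ p := by
  simp_rw [sqrt_sq_add_sq_rpow ha]
  rw [integral_const_mul, Measure.integral_comp_div (fun t => √(1 + t ^ 2) ^ p), smul_eq_mul,
    abs_of_pos ha, rpow_add_one ha.ne', mul_assoc]

theorem mul_rpow_sub_one_le_rpow {x y : ℝ} (hxy : x ≤ y) (hy : 0 < y) (p : ℝ) :
    x * y ^ (p - 1) ≤ y ^ p := by
  calc x * y ^ (p - 1) ≤ y * y ^ (p - 1) := by gcongr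
    _ = y ^ p := by rw [mul_comm, ← rpow_add_one hy.ne', sub_add_cancel]

end Real

open Real in
theorem middle_range_integral_estimate (n : ℕ) (M : ℝ) (hM : M < -1) :
    ∃ C > 0, ∀ (σ : EuclideanSpace ℝ (Fin n)) (ρt : ℝ),
      ∫ ρ in {ρ : ℝ | ‖σ‖ ≤ |ρ| ∧ |ρ| ≤ (1/2) * |ρt|},
          Real.sqrt (1 + ρ^2) * (Real.sqrt (1 + ‖σ‖^2 + ρ^2)) ^ (M - 1)
        ≤ C * (Real.sqrt (1 + ‖σ‖^2)) ^ (M + 1) := by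
  set C₀ := ∫ t : ℝ, √(1 + t ^ 2) ^ M
  have hC₀ : 0 ≤ C₀ := integral_nonneg fun t => by positivity
  refine ⟨C₀ + 1, by positivity, fun σ ρt => ?_⟩
  set a := √(1 + ‖σ‖ ^ 2)
  have ha : 0 < a := sqrt_pos.2 (by positivity)
  have ha₂ : a ^ 2 = 1 + ‖σ‖ ^ 2 := sq_sqrt (by positivity)
  have hweight : ∀ ρ, 1 + ‖σ‖ ^ 2 + ρ ^ 2 = a ^ 2 + ρ ^ 2 := fun ρ => by rw [ha₂]
  have hdom := integrable_sqrt_sq_add_sq_rpow ha hM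
  simp_rw [hweight]
  calc _ ≤ ∫ ρ in {ρ : ℝ | ‖σ‖ ≤ |ρ| ∧ |ρ| ≤ (1/2) * |ρt|}, √(a ^ 2 + ρ ^ 2) ^ M :=
        integral_mono_of_nonneg (.of_forall fun ρ => by positivity) hdom.integrableOn
          (.of_forall fun ρ => mul_rpow_sub_one_le_rpow
            (sqrt_le_sqrt (by linarith [sq_nonneg ‖σ‖])) (sqrt_pos.2 (by positivity)) M)
    _ ≤ ∫ ρ : ℝ, √(a ^ 2 + ρ ^ 2) ^ M :=
        setIntegral_le_integral hdom (.of_forall fun ρ => by positivity)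
    _ = a ^ (M + 1) * C₀ := integral_sqrt_sq_add_sq_rpow ha M
    _ ≤ (C₀ + 1) * a ^ (M + 1) := by
        rw [mul_comm]; gcongr; linarith
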